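/- arXiv:1602.08359 — 2 statements merged into one kernel-verified Lean document; each statement's English description precedes it below -/
import Mathlib

section
/- Let S = ⟨-4⟩ ⊕ ⟨4⟩ ⊕ A_2 be the even hyperbolic lattice of rank 4 with basis h, e, e1, e2 where (h,h) = -4, (e,e) = 4, the pair e1, e2 has Gram matrix [[2,-1],[-1,2]], and the three summands are mutually orthogonal. Let P = {e1, e2, h - e - e1 - e2, h + e - e1 - e2, h - e1 - 2e2, h - 2e1 - e2}. Then every element of P has square 2, but there exists no vector ρ ∈ S ⊗ ℚ with (ρ, δ) = -1 for every δ ∈ P. -/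
/-- The bilinear form on `ℚ^n` given by a Gram matrix `G`. -/
def bil {n : ℕ} (G : Matrix (Fin n) (Fin n) ℚ) (x y : Fin n → ℚ) : ℚ :=
  ∑ i, ∑ j, x i * G i j * y j

/-- Gram matrix of `S = ⟨-4⟩ ⊕ ⟨4⟩ ⊕ A₂` in the basis `h, e, e1, e2`. -/
def G5 : Matrix (Fin 4) (Fin 4) ℚ := !![-4, 0, 0, 0; 0, 4, 0, 0; 0, 0, 2, -1; 0, 0, -1, 2]

/-- `P = (e1, e2, h-e-e1-e2, h+e-e1-e2, h-e1-2e2, h-2e1-e2)`. -/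
def P5 : Fin 6 → (Fin 4 → ℚ) :=
  ![![0, 0, 1, 0], ![0, 0, 0, 1], ![1, -1, -1, -1], ![1, 1, -1, -1],
    ![1, 0, -1, -2], ![1, 0, -2, -1]]

/-! Four of the roots are linearly dependent:
`(h - e - e1 - e2) + (h + e - e1 - e2) - 2 (h - e1 - 2e2) - 2 e2 = 0`.
Pairing a Weyl vector `ρ` with this relation would give `0 = -1 - 1 + 2 + 2`,
whatever the Gram matrix. -/

theorem bil_eq_toLinearMap₂' {n : ℕ} (G : Matrix (Fin n) (Fin n) ℚ) (x y : Fin n → ℚ) :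
    bil G x y = Matrix.toLinearMap₂' ℚ G x y := by
  simp only [bil, Matrix.toLinearMap₂'_apply, smul_eq_mul]
  exact Finset.sum_congr rfl fun _ _ => Finset.sum_congr rfl fun _ _ => by ring

theorem bil_sum_smul_right {n : ℕ} {ι : Type*} (G : Matrix (Fin n) (Fin n) ℚ) (x : Fin n → ℚ)
    (s : Finset ι) (c : ι → ℚ) (v : ι → Fin n → ℚ) :
    bil G x (∑ i ∈ s, c i • v i) = ∑ i ∈ s, c i * bil G x (v i) := by
  simp only [bil_eq_toLinearMap₂', map_sum, map_smul, smul_eq_mul]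

theorem not_exists_bil_eq_neg_one_of_relation {n : ℕ} {ι : Type*} (G : Matrix (Fin n) (Fin n) ℚ)
    (v : ι → Fin n → ℚ) (s : Finset ι) (c : ι → ℚ) (hrel : ∑ i ∈ s, c i • v i = 0)
    (hc : ∑ i ∈ s, c i ≠ 0) : ¬ ∃ ρ : Fin n → ℚ, ∀ i, bil G ρ (v i) = -1 := by
  rintro ⟨ρ, hρ⟩
  apply hc
  calc ∑ i ∈ s, c i = -∑ i ∈ s, c i * bil G ρ (v i) := by simp [hρ]
    _ = -bil G ρ (∑ i ∈ s, c i • v i) := by rw [bil_sum_smul_right]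
    _ = 0 := by rw [hrel, bil_eq_toLinearMap₂', map_zero, neg_zero]

theorem P5_relation : ∑ i, ![0, -2, 1, 1, -2, 0] i • P5 i = 0 := by
  ext k
  fin_cases k <;> norm_num [P5, Fin.sum_univ_succ]

theorem stmt5 :
    (∀ i, bil G5 (P5 i) (P5 i) = 2) ∧
    ¬ ∃ ρ : Fin 4 → ℚ, ∀ i, bil G5 ρ (P5 i) = -1 := by
  refine ⟨fun i => ?_, not_exists_bil_eq_neg_one_of_relation G5 P5 _ _ P5_relation ?_⟩
  · fin_cases i <;> simp [bil, G5, P5, Fin.sum_univ_four] <;> norm_num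
  · norm_num [Fin.sum_univ_succ]
end

section
/- Let N_8 be the lattice generated by a1,...,a8 with (a_i,a_j) = 2δ_ij together with h = (a1 + ... + a8)/2. Then N_8 satisfies the condition (Norm_2): for every vector v in the dual lattice N_8* whose norm (v,v) is not congruent to 0 modulo 2ℤ, there exists w ∈ N_8 such that 0 < (v+w, v+w) < 2. -/
/-!
Every `v ∈ N₈*` has `2v ∈ ℤ⁸`, so translating by an integer vector brings it to a vector
`½·1_S` with coordinates in `{0, ½}`, of norm `|S|/2`; translating further by `-h` gives
`-½·1_{Sᶜ}`, of norm `(8 - |S|)/2`. Since `N₈` is even and `v` pairs integrally with it, the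
norm modulo `2ℤ` does not change under translation by `N₈`, so the hypothesis on `v` says
`4 ∤ |S|`. Then whichever of `S`, `Sᶜ` has at most three elements is nonempty, and the
corresponding representative has norm `1/2`, `1` or `3/2`.
-/

/-- The Euclidean pairing on `ℚ^8`; the form of `N₈` is `(x,y) = 2·dot₈ x y`. -/
def dot8 (x y : Fin 8 → ℚ) : ℚ := ∑ i, x i * y i

/-- The generators `a_i` of `N₈`: standard basis vectors, so `(a_i, a_j) = 2δ_ij`. -/
def av (i : Fin 8) : Fin 8 → ℚ := fun j => if j = i then 1 else 0

/-- `h = (a1 + … + a8)/2`. -/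
def hv : Fin 8 → ℚ := fun _ => 1/2

/-- Nikulin's lattice `N₈ ⊂ ℚ^8`: the `ℤ`-span of `a1, …, a8` and `h`. -/
def N8 : Set (Fin 8 → ℚ) :=
  (Submodule.span ℤ (Set.range av ∪ {hv}) : Submodule ℤ (Fin 8 → ℚ))

/-- The dual lattice `N₈* ⊂ ℚ^8` (with respect to the form `2·dot₈`). -/
def N8dual : Set (Fin 8 → ℚ) := {x | ∀ v ∈ N8, ∃ k : ℤ, 2 * dot8 x v = k}

open Matrix

lemma dot8_eq_dotProduct (x y : Fin 8 → ℚ) : dot8 x y = x ⬝ᵥ y := rfl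

lemma mem_N8_iff {w : Fin 8 → ℚ} :
    w ∈ N8 ↔ ∃ (n : Fin 8 → ℤ) (c : ℤ), w = (fun i => (n i : ℚ)) + c • hv := by
  have hav (n : Fin 8 → ℤ) : ∑ i, n i • av i = fun i => (n i : ℚ) := by
    funext j
    simp [av, Finset.sum_apply]
  change w ∈ Submodule.span ℤ (Set.range av ∪ {hv}) ↔ _
  simp_rw [Submodule.span_union, Submodule.mem_sup, Submodule.mem_span_range_iff_exists_fun,
    Submodule.mem_span_singleton, hav]
  constructor
  · rintro ⟨_, ⟨n, rfl⟩, _, ⟨c, rfl⟩, rfl⟩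
    exact ⟨n, c, rfl⟩
  · rintro ⟨n, c, rfl⟩
    exact ⟨_, ⟨n, rfl⟩, _, ⟨c, rfl⟩, rfl⟩

lemma intCast_mem_N8 (n : Fin 8 → ℤ) : (fun i => (n i : ℚ)) ∈ N8 :=
  mem_N8_iff.2 ⟨n, 0, by simp⟩

lemma hv_mem_N8 : hv ∈ N8 :=
  mem_N8_iff.2 ⟨0, 1, by ext; simp⟩

lemma av_mem_N8 (i : Fin 8) : av i ∈ N8 :=
  Submodule.subset_span (Or.inl ⟨i, rfl⟩)

lemma even_norm_of_mem_N8 {w : Fin 8 → ℚ} (hw : w ∈ N8) :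
    ∃ k : ℤ, 2 * dot8 w w = 2 * k := by
  obtain ⟨n, c, rfl⟩ := mem_N8_iff.1 hw
  refine ⟨∑ i, n i ^ 2 + c * ∑ i, n i + 2 * c ^ 2, ?_⟩
  simp only [dot8, hv, Pi.add_apply, Pi.smul_apply]
  push_cast [zsmul_eq_mul]
  have hterm (x : Fin 8) : (n x + c * (1 / 2) : ℚ) * (n x + c * (1 / 2)) =
      n x ^ 2 + c * n x + c ^ 2 / 4 := by ring
  simp only [hterm, Finset.sum_add_distrib, ← Finset.mul_sum, Finset.sum_const, Finset.card_univ,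
    Fintype.card_fin, nsmul_eq_mul]
  ring

lemma exists_norm_add_eq_norm_add_two_mul {v w : Fin 8 → ℚ} (hvd : v ∈ N8dual) (hw : w ∈ N8) :
    ∃ k : ℤ, 2 * dot8 (v + w) (v + w) = 2 * dot8 v v + 2 * k := by
  obtain ⟨j, hj⟩ := hvd w hw
  obtain ⟨k, hk⟩ := even_norm_of_mem_N8 hw
  refine ⟨j + k, ?_⟩
  simp only [dot8_eq_dotProduct, add_dotProduct, dotProduct_add, dotProduct_comm w v] at *
  push_cast
  linarith

lemma two_mul_apply_int_of_mem_N8dual {v : Fin 8 → ℚ} (hvd : v ∈ N8dual) (i : Fin 8) :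
    ∃ m : ℤ, 2 * v i = m := by
  obtain ⟨m, hm⟩ := hvd (av i) (av_mem_N8 i)
  exact ⟨m, by simpa [dot8, av] using hm⟩

def halfIndicator {ι : Type*} [DecidableEq ι] (S : Finset ι) : ι → ℚ :=
  fun i => if i ∈ S then 1 / 2 else 0

lemma exists_intCast_add_eq_halfIndicator {ι : Type*} [Fintype ι] [DecidableEq ι] {v : ι → ℚ}
    (h2v : ∀ i, ∃ m : ℤ, 2 * v i = m) :
    ∃ (n : ι → ℤ) (S : Finset ι), v + (fun i => (n i : ℚ)) = halfIndicator S := by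
  choose m hm using h2v
  refine ⟨fun i => -(m i / 2), Finset.univ.filter (fun i => m i % 2 = 1), funext fun i => ?_⟩
  have hdiv : ((m i / 2 : ℤ) : ℚ) = (m i - m i % 2 : ℤ) / 2 := by
    rw [Int.emod_def]
    push_cast
    ring
  have hvi : v i = m i / 2 := by linarith [hm i]
  simp only [Pi.add_apply, halfIndicator, Finset.mem_filter, Finset.mem_univ, true_and,
    Int.cast_neg, hdiv, hvi]
  rcases Int.emod_two_eq (m i) with h | h
  · simp [h]
  · simp [h]
    ring

lemma norm_halfIndicator (S : Finset (Fin 8)) :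
    2 * dot8 (halfIndicator S) (halfIndicator S) = S.card / 2 := by
  have hsq (i : Fin 8) : halfIndicator S i * halfIndicator S i = if i ∈ S then 1 / 4 else 0 := by
    unfold halfIndicator
    split_ifs <;> norm_num
  simp only [dot8, hsq, Finset.sum_ite_mem, Finset.univ_inter, Finset.sum_const, nsmul_eq_mul]
  ring

lemma halfIndicator_sub_hv (S : Finset (Fin 8)) : halfIndicator S - hv = -halfIndicator Sᶜ := by
  funext i
  by_cases hi : i ∈ S <;> simp [halfIndicator, hv, hi]

lemma norm_halfIndicator_mem_Ioo {S : Finset (Fin 8)} (h1 : 1 ≤ S.card) (h3 : S.card ≤ 3) :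
    0 < 2 * dot8 (halfIndicator S) (halfIndicator S) ∧
      2 * dot8 (halfIndicator S) (halfIndicator S) < 2 := by
  have h1' : (1 : ℚ) ≤ S.card := by exact_mod_cast h1
  have h3' : (S.card : ℚ) ≤ 3 := by exact_mod_cast h3
  rw [norm_halfIndicator]
  constructor <;> linarith

/-- `N₈` satisfies the condition (Norm₂): for every `v ∈ N₈*` whose norm is not
congruent to `0` modulo `2ℤ` there is `w ∈ N₈` with `0 < (v+w, v+w) < 2`. -/
theorem stmt15 :
    ∀ v ∈ N8dual, (¬ ∃ k : ℤ, 2 * dot8 v v = 2 * k) →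
      ∃ w ∈ N8, 0 < 2 * dot8 (v + w) (v + w) ∧ 2 * dot8 (v + w) (v + w) < 2 := by
  intro v hvd hodd
  obtain ⟨n, S, hS⟩ := exists_intCast_add_eq_halfIndicator (two_mul_apply_int_of_mem_N8dual hvd)
  have hS4 : ¬ 4 ∣ S.card := by
    rintro ⟨k, hk⟩
    obtain ⟨j, hj⟩ := exists_norm_add_eq_norm_add_two_mul hvd (intCast_mem_N8 n)
    rw [hS, norm_halfIndicator, hk] at hj
    exact hodd ⟨k - j, by push_cast at hj ⊢; linarith⟩
  have hcard : Sᶜ.card + S.card = 8 := by simp [Finset.card_compl_add_card]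
  by_cases hsmall : S.card ≤ 3
  · exact ⟨_, intCast_mem_N8 n, hS ▸ norm_halfIndicator_mem_Ioo (by omega) hsmall⟩
  · refine ⟨_, sub_mem (intCast_mem_N8 n) hv_mem_N8, ?_⟩
    rw [← add_sub_assoc, hS, halfIndicator_sub_hv, dot8_eq_dotProduct, neg_dotProduct_neg,
      ← dot8_eq_dotProduct]
    exact norm_halfIndicator_mem_Ioo (by omega) (by omega)
end
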